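/- Fix $A \in (0, A^*)$ where $A^*$ solves $M_{1,0}(2/A^*) = 0$, and suppose $\lambda_A \in (0,1/8)$ with $\xi = \sqrt{1-8\lambda_A}$ satisfies $M_{1,\xi/2}(2/A) = 0$. Then the function $q_A(x) = \frac{\xi+1}{2}\cdot \frac{x^{-1} e^{-1/x}\, M_{1,\xi/2}(2/x)}{e^{-1/A}\, M_{0,\xi/2}(2/A)}$ for $x \ge A$ (and $0$ otherwise) satisfies: (i) $q_A(A) = 0$; (ii) $\int_A^{\infty} q_A(x)\,dx = 1$; and (iii) for $x > A$, $\int_A^x q_A(y)\,dy = 1 - \frac{e^{-1/x} M_{0,\xi/2}(2/x)}{e^{-1/A} M_{0,\xi/2}(2/A)}$. -/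

import Mathlib

/-!
Write `a = (1 + ξ) / 2` and `u = 2 / y`. Then `e^{-1/y} M_{0,ξ/2}(2/y) = u^a e^{-u} ₁F₁(a; 2a; u)`,
and Kummer's contiguous relation `z M' + (b - a - z) M = (b - a) M(a - 1)` (checked coefficientwise
on the power series, which converges everywhere because its coefficients are `O(K^n / n!)`)
turns the derivative of this tail in `y` into `-a y⁻¹ e^{-1/y} M_{1,ξ/2}(2/y)`. Hence the claimed
cdf is an antiderivative of `q_A`; it vanishes at `A` and tends to `1` at infinity because
`M_{κ,μ}(u) = O(u^{1/2+μ})` as `u → 0`, which also makes `q_A = O(y^{-1-a})` integrable.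
-/

open MeasureTheory Real Filter Set

/-- Kummer's confluent hypergeometric function ₁F₁(a; b; x). -/
noncomputable def hyp1F1 (a b x : ℝ) : ℝ :=
  ∑' n : ℕ, ((ascPochhammer ℝ n).eval a / (ascPochhammer ℝ n).eval b) * x ^ n / (n.factorial : ℝ)

/-- The Whittaker M function. -/
noncomputable def whittakerM (a b x : ℝ) : ℝ :=
  x ^ (1/2 + b) * Real.exp (-x/2) * hyp1F1 (1/2 + b - a) (1 + 2*b) x

/-- The Whittaker W function, defined via the connection formula
`W_{a,b} = Γ(-2b)/Γ(1/2-b-a) M_{a,b} + Γ(2b)/Γ(1/2+b-a) M_{a,-b}`,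
with exceptional parameter values handled by continuity in `b` (a limit). -/
noncomputable def whittakerW (a b x : ℝ) : ℝ :=
  limUnder (nhdsWithin b {b}ᶜ) (fun c =>
    Real.Gamma (-(2*c)) / Real.Gamma (1/2 - c - a) * whittakerM a c x +
    Real.Gamma (2*c) / Real.Gamma (1/2 + c - a) * whittakerM a (-c) x)

/-- Speed density of the Shiryaev martingale. -/
noncomputable def speedm (x : ℝ) : ℝ := (2 / x^2) * Real.exp (-2/x)

open Topology Asymptotics
open scoped Nat

section ExpTypeSeries

variable {a : ℕ → ℝ} {K : ℝ}

theorem summable_mul_pow_of_abs_le (ha : ∀ n, |a n| ≤ K ^ n / n !) (x : ℝ) :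
    Summable fun n => a n * x ^ n := by
  refine .of_norm_bounded (Real.summable_pow_div_factorial (K * |x|)) fun n => ?_
  rw [norm_mul, norm_pow, Real.norm_eq_abs, Real.norm_eq_abs, mul_pow, mul_div_right_comm]
  gcongr
  exact ha n

theorem hasDerivAt_tsum_mul_pow_of_abs_le (ha : ∀ n, |a n| ≤ K ^ n / n !) (x : ℝ) :
    HasDerivAt (fun y => ∑' n, a n * y ^ n) (∑' n, a n * (n * x ^ (n - 1))) x := by
  set R := |x| + 1
  have hR : 1 ≤ R := by simp [R]
  have hx : x ∈ Ioo (-R) R := abs_lt.mp (lt_add_one _)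
  have hbound : ∀ n, ∀ y ∈ Ioo (-R) R, ‖a n * (n * y ^ (n - 1))‖ ≤ (2 * K * R) ^ n / n ! := by
    intro n y hy
    have hyR : |y| ≤ R := (abs_lt.mpr hy).le
    calc ‖a n * (n * y ^ (n - 1))‖ = |a n| * (n * |y| ^ (n - 1)) := by simp
      _ ≤ K ^ n / n ! * (2 ^ n * R ^ n) := by
          gcongr
          · exact (abs_nonneg _).trans (ha n)
          · exact ha n
          · exact_mod_cast Nat.lt_two_pow_self.le
          · exact (pow_le_pow_left₀ (abs_nonneg y) hyR _).trans (pow_le_pow_right₀ hR (n.sub_le 1))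
      _ = (2 * K * R) ^ n / n ! := by rw [mul_pow, mul_pow]; ring
  exact hasDerivAt_tsum_of_isPreconnected (Real.summable_pow_div_factorial (2 * K * R))
    isOpen_Ioo isPreconnected_Ioo (fun n y _ => (hasDerivAt_pow n y).const_mul (a n)) hbound
    (Set.mem_Ioo.mpr ⟨by linarith, by linarith⟩ : (0 : ℝ) ∈ Ioo (-R) R)
    (summable_mul_pow_of_abs_le ha 0) hx

end ExpTypeSeries

theorem abs_ascPochhammer_eval_le {b : ℝ} (hb : 0 < b) (c : ℝ) (n : ℕ) :
    |(ascPochhammer ℝ n).eval c| ≤ max 1 (|c| / b) ^ n * (ascPochhammer ℝ n).eval b := by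
  induction n with
  | zero => simp
  | succ n ih =>
    have hcb : |c| ≤ max 1 (|c| / b) * b := by
      rw [← div_le_iff₀ hb]; exact le_max_right _ _
    have hstep : |c + n| ≤ max 1 (|c| / b) * (b + n) := by
      calc |c + n| ≤ |c| + n := by simpa using abs_add_le c n
        _ ≤ max 1 (|c| / b) * b + max 1 (|c| / b) * n := by
          gcongr; exact le_mul_of_one_le_left (by positivity) (le_max_left _ _)
        _ = _ := by ring
    rw [ascPochhammer_succ_eval, ascPochhammer_succ_eval, abs_mul]
    calc _ ≤ max 1 (|c| / b) ^ n * (ascPochhammer ℝ n).eval b * (max 1 (|c| / b) * (b + n)) := by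
          gcongr
          have := ascPochhammer_pos n b hb
          positivity
      _ = _ := by ring

noncomputable def hyp1F1Coeff (c b : ℝ) (n : ℕ) : ℝ :=
  (ascPochhammer ℝ n).eval c / (ascPochhammer ℝ n).eval b / n !

theorem hyp1F1_eq_tsum (c b x : ℝ) : hyp1F1 c b x = ∑' n, hyp1F1Coeff c b n * x ^ n :=
  tsum_congr fun n => by rw [hyp1F1Coeff]; ring

theorem abs_hyp1F1Coeff_le {b : ℝ} (hb : 0 < b) (c : ℝ) (n : ℕ) :
    |hyp1F1Coeff c b n| ≤ max 1 (|c| / b) ^ n / n ! := by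
  have hpos := ascPochhammer_pos n b hb
  rw [hyp1F1Coeff, abs_div, abs_div, abs_of_pos hpos, Nat.abs_cast]
  gcongr
  rw [div_le_iff₀ hpos]
  exact abs_ascPochhammer_eval_le hb c n

section Hyp1F1

variable {b : ℝ}

theorem hasDerivAt_hyp1F1 (hb : 0 < b) (c x : ℝ) :
    HasDerivAt (hyp1F1 c b) (∑' n, hyp1F1Coeff c b n * (n * x ^ (n - 1))) x := by
  rw [show hyp1F1 c b = fun y => ∑' n, hyp1F1Coeff c b n * y ^ n from funext (hyp1F1_eq_tsum c b)]
  exact hasDerivAt_tsum_mul_pow_of_abs_le (abs_hyp1F1Coeff_le hb c) x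

theorem continuous_hyp1F1 (hb : 0 < b) (c : ℝ) : Continuous (hyp1F1 c b) :=
  continuous_iff_continuousAt.mpr fun x => (hasDerivAt_hyp1F1 hb c x).continuousAt

theorem hasSum_hyp1F1 (hb : 0 < b) (c x : ℝ) :
    HasSum (fun n => hyp1F1Coeff c b n * x ^ n) (hyp1F1 c b x) := by
  rw [hyp1F1_eq_tsum]
  exact (summable_mul_pow_of_abs_le (abs_hyp1F1Coeff_le hb c) x).hasSum

theorem hyp1F1Coeff_contiguous (hb : 0 < b) (a : ℝ) (n : ℕ) :
    (n + 1 + b - a) * hyp1F1Coeff a b (n + 1) - (b - a) * hyp1F1Coeff (a - 1) b (n + 1)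
      = hyp1F1Coeff a b n := by
  have hpos := ascPochhammer_pos n b hb
  have hpoch : (ascPochhammer ℝ (n + 1)).eval (a - 1) = (a - 1) * (ascPochhammer ℝ n).eval a := by
    simp [ascPochhammer_succ_left, Polynomial.eval_comp]
  rw [hyp1F1Coeff, hyp1F1Coeff, hyp1F1Coeff, hpoch, ascPochhammer_succ_eval,
    ascPochhammer_succ_eval, Nat.factorial_succ]
  have : (0 : ℝ) < b + n := by positivity
  push_cast
  field_simp
  ring

theorem hyp1F1_contiguous (hb : 0 < b) (a z : ℝ) :
    z * deriv (hyp1F1 a b) z + (b - a - z) * hyp1F1 a b z = (b - a) * hyp1F1 (a - 1) b z := by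
  set f : ℕ → ℝ := fun n => hyp1F1Coeff a b n * z ^ n
  have hzd : z * deriv (hyp1F1 a b) z = ∑' n, n * f n := by
    rw [(hasDerivAt_hyp1F1 hb a z).deriv, ← tsum_mul_left]
    congr 1; funext n
    cases n with
    | zero => simp
    | succ n => simp only [f, Nat.add_sub_cancel, pow_succ]; ring
  set t : ℕ → ℝ := fun n => n * f n + (b - a) * f n - (b - a) * hyp1F1Coeff (a - 1) b n * z ^ n
  have ht_succ : (fun n => t (n + 1)) = fun n => z * f n := by
    funext n
    simp only [t, f]
    rw [← hyp1F1Coeff_contiguous hb a n]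
    push_cast; ring
  have ht : HasSum t (z * hyp1F1 a b z) := by
    rw [← hasSum_nat_add_iff' 1, ht_succ]
    simpa [t, f, hyp1F1Coeff] using (hasSum_hyp1F1 hb a z).mul_left z
  have hn : HasSum (fun n => n * f n)
      (z * hyp1F1 a b z - (b - a) * hyp1F1 a b z + (b - a) * hyp1F1 (a - 1) b z) := by
    have hfun : (fun n => t n - (b - a) * f n + (b - a) * (hyp1F1Coeff (a - 1) b n * z ^ n))
        = fun n => n * f n := by
      funext n; simp only [t]; ring
    rw [← hfun]
    exact (ht.sub ((hasSum_hyp1F1 hb a z).mul_left (b - a))).add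
      ((hasSum_hyp1F1 hb (a - 1) z).mul_left (b - a))
  rw [hzd, hn.tsum_eq]
  ring

end Hyp1F1

theorem tendsto_const_div_atTop (c : ℝ) : Tendsto (fun y : ℝ => c / y) atTop (𝓝 0) :=
  tendsto_const_nhds.div_atTop tendsto_id

section WhittakerM

variable {μ : ℝ}

theorem continuous_whittakerM (hμ : -1/2 < μ) (κ : ℝ) : Continuous (whittakerM κ μ) :=
  ((continuous_id.rpow_const fun _ => Or.inr (by linarith)).mul (by fun_prop)).mul
    (continuous_hyp1F1 (by linarith) _)

theorem tendsto_whittakerM_two_div_atTop (hμ : -1/2 < μ) (κ : ℝ) :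
    Tendsto (fun y => whittakerM κ μ (2 / y)) atTop (𝓝 0) := by
  have h0 : whittakerM κ μ 0 = 0 := by
    rw [whittakerM, zero_rpow (by linarith), zero_mul, zero_mul]
  rw [← h0]
  exact ((continuous_whittakerM hμ κ).tendsto 0).comp (tendsto_const_div_atTop 2)

theorem isBigO_whittakerM_two_div_atTop (hμ : -1/2 < μ) (κ : ℝ) :
    (fun y => whittakerM κ μ (2 / y)) =O[atTop] fun y => y ^ (-(1/2 + μ)) := by
  have hpow : (fun y : ℝ => (2 / y) ^ (1/2 + μ)) =O[atTop] fun y => y ^ (-(1/2 + μ)) := by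
    refine ((isBigO_refl _ _).const_mul_left (2 ^ (1/2 + μ))).congr' ?_ EventuallyEq.rfl
    filter_upwards [eventually_gt_atTop 0] with y hy
    rw [div_rpow (by norm_num) hy.le, rpow_neg hy.le]
    exact (div_eq_mul_inv _ _).symm
  have hcont : Continuous fun u => exp (-u / 2) * hyp1F1 (1/2 + μ - κ) (1 + 2*μ) u :=
    (by fun_prop : Continuous fun u : ℝ => exp (-u / 2)).mul (continuous_hyp1F1 (by linarith) _)
  have hbdd : (fun y : ℝ => exp (-(2 / y) / 2) * hyp1F1 (1/2 + μ - κ) (1 + 2*μ) (2 / y))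
      =O[atTop] fun _ => (1 : ℝ) :=
    ((hcont.tendsto 0).comp (tendsto_const_div_atTop 2)).isBigO_one ℝ
  simpa [whittakerM, mul_assoc] using hpow.mul hbdd

theorem integrableOn_Ioi_whittakerM_two_div (hμ : -1/2 < μ) (κ : ℝ) {A : ℝ} (hA : 0 < A) :
    IntegrableOn (fun y => 1 / y * exp (-1 / y) * whittakerM κ μ (2 / y)) (Ioi A) := by
  have hcont : ContinuousOn (fun y => 1 / y * exp (-1 / y) * whittakerM κ μ (2 / y)) (Ici A) := by
    have hy : ∀ y ∈ Ici A, y ≠ 0 := fun y hy => (hA.trans_le hy).ne'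
    exact ((continuousOn_const.div continuousOn_id hy).mul
      (continuous_exp.comp_continuousOn (continuousOn_const.div continuousOn_id hy))).mul
      ((continuous_whittakerM hμ κ).comp_continuousOn (continuousOn_const.div continuousOn_id hy))
  have hinv : (fun y : ℝ => 1 / y) =O[atTop] fun y => y ^ (-1 : ℝ) :=
    EventuallyEq.isBigO (by
      filter_upwards [eventually_gt_atTop 0] with y hy
      rw [rpow_neg_one, one_div])
  have hexp : (fun y : ℝ => exp (-1 / y)) =O[atTop] fun _ => (1 : ℝ) :=
    ((continuous_exp.tendsto 0).comp (tendsto_const_div_atTop (-1))).isBigO_one ℝ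
  have hO : (fun y => 1 / y * exp (-1 / y) * whittakerM κ μ (2 / y))
      =O[atTop] fun y => y ^ (-1 + -(1/2 + μ)) := by
    refine ((hinv.mul hexp).mul (isBigO_whittakerM_two_div_atTop hμ κ)).congr' EventuallyEq.rfl ?_
    filter_upwards [eventually_gt_atTop 0] with y hy
    rw [rpow_add hy, mul_one]
  exact ((hcont.locallyIntegrableOn measurableSet_Ici).integrableOn_of_isBigO_atTop hO
    (integrableAtFilter_rpow_atTop_iff.mpr (by linarith))).mono_set Ioi_subset_Ici_self

theorem hasDerivAt_exp_mul_whittakerM_zero (hμ : -1/2 < μ) {u : ℝ} (hu : 0 < u) :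
    HasDerivAt (fun u => exp (-u / 2) * whittakerM 0 μ u)
      ((μ + 1/2) / u * exp (-u / 2) * whittakerM 1 μ u) u := by
  have hb : 0 < 1 + 2*μ := by linarith
  have hexp : ∀ v : ℝ, exp (-v) = exp (-v / 2) * exp (-v / 2) := fun v => by
    rw [← exp_add]; ring_nf
  have hfun : (fun u => exp (-u / 2) * whittakerM 0 μ u)
      = fun u => u ^ (1/2 + μ) * exp (-u) * hyp1F1 (1/2 + μ) (1 + 2*μ) u := by
    funext v
    rw [whittakerM, sub_zero, hexp]
    ring
  have hF := (hasDerivAt_hyp1F1 hb (1/2 + μ) u).differentiableAt.hasDerivAt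
  have hrel := hyp1F1_contiguous hb (1/2 + μ) u
  have hinv : u * u⁻¹ = 1 := mul_inv_cancel₀ hu.ne'
  rw [hfun]
  refine (((hasDerivAt_rpow_const (Or.inl hu.ne')).mul (hasDerivAt_neg u).exp).mul
    hF).congr_deriv ?_
  simp only [Pi.mul_apply]
  rw [whittakerM, rpow_sub_one hu.ne', hexp]
  -- the contiguous relation, multiplied by `u ^ (p - 1) * e ^ (-u)` with `p = 1/2 + μ`
  linear_combination (u ^ (1/2 + μ) * u⁻¹ * exp (-u / 2) * exp (-u / 2)) * hrel
    - (u ^ (1/2 + μ) * exp (-u / 2) * exp (-u / 2)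
      * (deriv (hyp1F1 (1/2 + μ) (1 + 2*μ)) u - hyp1F1 (1/2 + μ) (1 + 2*μ) u)) * hinv

theorem hasDerivAt_exp_mul_whittakerM_zero_two_div (hμ : -1/2 < μ) {y : ℝ} (hy : 0 < y) :
    HasDerivAt (fun y => exp (-1 / y) * whittakerM 0 μ (2 / y))
      (-((μ + 1/2) * (1 / y * exp (-1 / y) * whittakerM 1 μ (2 / y)))) y := by
  have h2 : HasDerivAt (fun y : ℝ => 2 / y) (-(2 / y ^ 2)) y := by
    simpa [div_eq_mul_inv] using (hasDerivAt_inv hy.ne').const_mul 2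
  have h := (hasDerivAt_exp_mul_whittakerM_zero hμ (by positivity : 0 < 2 / y)).comp y h2
  have hexp : ∀ x : ℝ, -(2 / x) / 2 = -1 / x := fun x => by ring
  simp only [Function.comp_def, hexp] at h
  refine h.congr_deriv ?_
  field_simp

end WhittakerM

theorem qsd_subcritical_case_general (A Astar lamA : ℝ)
    (hA : A ∈ Set.Ioo 0 Astar) :
    let ξ := Real.sqrt (1 - 8*lamA)
    whittakerM 1 (ξ/2) (2/A) = 0 → whittakerM 0 (ξ/2) (2/A) ≠ 0 →
    (let q : ℝ → ℝ := fun x => if A ≤ x then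
        ((ξ+1)/2) * ((1/x) * Real.exp (-1/x) * whittakerM 1 (ξ/2) (2/x)) /
          (Real.exp (-1/A) * whittakerM 0 (ξ/2) (2/A))
      else 0
     q A = 0 ∧
     (∫ x in Set.Ioi A, q x = 1) ∧
     ∀ x : ℝ, A < x →
       ∫ y in A..x, q y
         = 1 - (Real.exp (-1/x) * whittakerM 0 (ξ/2) (2/x)) /
               (Real.exp (-1/A) * whittakerM 0 (ξ/2) (2/A))) := by
  intro ξ hM1 hM0 q
  have hμ : -1/2 < ξ/2 := by linarith [Real.sqrt_nonneg (1 - 8*lamA)]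
  set C := exp (-1/A) * whittakerM 0 (ξ/2) (2/A)
  have hC : C ≠ 0 := mul_ne_zero (exp_ne_zero _) hM0
  set cdf : ℝ → ℝ := fun y => 1 - exp (-1/y) * whittakerM 0 (ξ/2) (2/y) / C
  have hcdf_A : cdf A = 0 := show 1 - C / C = 0 by rw [div_self hC, sub_self]
  have hderiv : ∀ y ∈ Ici A, HasDerivAt cdf (q y) y := fun y (hy : A ≤ y) => by
    have h := ((hasDerivAt_exp_mul_whittakerM_zero_two_div hμ (hA.1.trans_le hy)).div_const
      C).const_sub 1
    refine h.congr_deriv ?_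
    simp only [q, if_pos hy]
    ring
  have hlim : Tendsto cdf atTop (𝓝 1) := by
    have h := ((((continuous_exp.tendsto 0).comp (tendsto_const_div_atTop (-1))).mul
      (tendsto_whittakerM_two_div_atTop hμ 0)).div_const C).const_sub 1
    simpa [Function.comp_def] using h
  have hint : IntegrableOn q (Ioi A) := by
    refine IntegrableOn.congr_fun ((integrableOn_Ioi_whittakerM_two_div hμ 1 hA.1).const_mul
      ((ξ+1)/2 / C)) (fun y (hy : A < y) => ?_) measurableSet_Ioi
    simp only [q, if_pos hy.le]
    ring
  refine ⟨by simp [q, hM1], ?_, fun x hx => ?_⟩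
  · rw [integral_Ioi_of_hasDerivAt_of_tendsto' hderiv hint hlim, hcdf_A, sub_zero]
  · rw [intervalIntegral.integral_eq_sub_of_hasDerivAt
      (fun y hy => hderiv y (by rw [uIcc_of_le hx.le] at hy; exact hy.1))
      ((intervalIntegrable_iff_integrableOn_Ioc_of_le hx.le).mpr
        (hint.mono_set Ioc_subset_Ioi_self)), hcdf_A, sub_zero]

/-- Theorem 3.1 of the paper: for `A ∈ (0, A*)` with `M_{1,0}(2/A*) = 0`,
if `λ_A ∈ (0,1/8)`, `ξ = √(1-8λ_A)` satisfies `M_{1,ξ/2}(2/A) = 0` (and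
`M_{0,ξ/2}(2/A) ≠ 0`), then the quasi-stationary pdf
`q_A(x) = ((ξ+1)/2) x⁻¹e^{-1/x}M_{1,ξ/2}(2/x) / (e^{-1/A}M_{0,ξ/2}(2/A))` for `x ≥ A`
(and 0 otherwise) satisfies (i) `q_A(A) = 0`, (ii) `∫_A^∞ q_A = 1`, and (iii) for `x > A`,
`∫_A^x q_A = 1 - e^{-1/x}M_{0,ξ/2}(2/x)/(e^{-1/A}M_{0,ξ/2}(2/A))`. -/
theorem qsd_subcritical_case (A Astar lamA : ℝ)
    (hAstar : whittakerM 1 0 (2/Astar) = 0) (hAstarpos : 0 < Astar)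
    (hA : A ∈ Set.Ioo 0 Astar) (hlam : lamA ∈ Set.Ioo 0 (1/8)) :
    let ξ := Real.sqrt (1 - 8*lamA)
    whittakerM 1 (ξ/2) (2/A) = 0 → whittakerM 0 (ξ/2) (2/A) ≠ 0 →
    (let q : ℝ → ℝ := fun x => if A ≤ x then
        ((ξ+1)/2) * ((1/x) * Real.exp (-1/x) * whittakerM 1 (ξ/2) (2/x)) /
          (Real.exp (-1/A) * whittakerM 0 (ξ/2) (2/A))
      else 0
     q A = 0 ∧
     (∫ x in Set.Ioi A, q x = 1) ∧
     ∀ x : ℝ, A < x →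
       ∫ y in A..x, q y
         = 1 - (Real.exp (-1/x) * whittakerM 0 (ξ/2) (2/x)) /
               (Real.exp (-1/A) * whittakerM 0 (ξ/2) (2/A))) :=
  qsd_subcritical_case_general A Astar lamA hA
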